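/- arXiv:2011.06806 — 2 statements merged into one kernel-verified Lean document; each statement's English description precedes it below -/
import Mathlib

section
/- Strict decrease of the state norm outside the invariant set (Lemma 2, claim i): let x(k) be the GRU state trajectory generated from an initial state x̄ ∈ ℝ^{n_x} by an input sequence u with ‖u(t)‖_∞ ≤ 1 for all t. Then for every time k at which ‖x(k)‖_∞ > 1 it holds that ‖x(k+1)‖_∞ < ‖x(k)‖_∞, and consequently ‖x(k)‖_∞ ≤ max(‖x̄‖_∞, 1) for all k ≥ 0. -/
/-!
Each coordinate of the GRU update is a convex combination `z xⱼ + (1 - z) r` whose weight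
`z = σ(·)` lies in `(0, 1)` and whose candidate `r = tanh(·)` has modulus below `1`. Hence every
new coordinate is bounded by `z ‖x‖∞ + (1 - z) ≤ max ‖x‖∞ 1`, with strict inequality below
`‖x‖∞` as soon as `‖x‖∞ > 1`; the bound `max ‖x̄‖∞ 1` then propagates along the trajectory.
-/

open Real Filter

/-- The sigmoid activation function. -/
noncomputable def sigmoid (s : ℝ) : ℝ := 1 / (1 + Real.exp (-s))

/-- Induced infinity norm of a matrix (maximum absolute row sum). -/
noncomputable def matNorm {n m : ℕ} (A : Matrix (Fin n) (Fin m) ℝ) : ℝ :=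
  ⨆ i, ∑ j, |A i j|

/-- Infinity norm of the horizontal concatenation `[A B c]`
(maximum absolute row sum of the concatenated matrix). -/
noncomputable def catNorm {n m p : ℕ} (A : Matrix (Fin n) (Fin m) ℝ)
    (B : Matrix (Fin n) (Fin p) ℝ) (c : Fin n → ℝ) : ℝ :=
  ⨆ i, (∑ j, |A i j| + ∑ j, |B i j| + |c i|)

/-- One step of the single-layer GRU:
`x⁺ = z ∘ x + (1 - z) ∘ tanh(W_r u + U_r (f ∘ x) + b_r)`,
`z = σ(W_z u + U_z x + b_z)`, `f = σ(W_f u + U_f x + b_f)`. -/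
noncomputable def gruStep {nu nx : ℕ}
    (Wz Wf Wr : Matrix (Fin nx) (Fin nu) ℝ)
    (Uz Uf Ur : Matrix (Fin nx) (Fin nx) ℝ)
    (bz bf br : Fin nx → ℝ)
    (u : Fin nu → ℝ) (x : Fin nx → ℝ) : Fin nx → ℝ :=
  let z : Fin nx → ℝ := fun i => _root_.sigmoid ((Wz.mulVec u + Uz.mulVec x + bz) i)
  let f : Fin nx → ℝ := fun i => _root_.sigmoid ((Wf.mulVec u + Uf.mulVec x + bf) i)
  let r : Fin nx → ℝ := fun i => Real.tanh ((Wr.mulVec u + Ur.mulVec (f * x) + br) i)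
  fun j => z j * x j + (1 - z j) * r j

theorem sigmoid_eq_real_sigmoid (s : ℝ) : _root_.sigmoid s = Real.sigmoid s :=
  one_div _

theorem abs_convex_comb_le {z a b : ℝ} (hz₀ : 0 ≤ z) (hz₁ : z ≤ 1) :
    |z * a + (1 - z) * b| ≤ z * |a| + (1 - z) * |b| := by
  simpa only [abs_mul, abs_of_nonneg hz₀, abs_of_nonneg (sub_nonneg.2 hz₁)]
    using abs_add_le (z * a) ((1 - z) * b)

theorem abs_convex_comb_le_max {z a b M : ℝ} (hz₀ : 0 ≤ z) (hz₁ : z ≤ 1)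
    (ha : |a| ≤ M) (hb : |b| ≤ 1) : |z * a + (1 - z) * b| ≤ max M 1 :=
  calc |z * a + (1 - z) * b| ≤ z * |a| + (1 - z) * |b| := abs_convex_comb_le hz₀ hz₁
    _ ≤ z * max M 1 + (1 - z) * max M 1 := by
        gcongr
        · exact ha.trans (le_max_left M 1)
        · exact hb.trans (le_max_right M 1)
    _ = max M 1 := by ring

theorem abs_convex_comb_lt {z a b M : ℝ} (hz₀ : 0 ≤ z) (hz₁ : z < 1)
    (ha : |a| ≤ M) (hb : |b| ≤ 1) (hM : 1 < M) : |z * a + (1 - z) * b| < M :=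
  calc |z * a + (1 - z) * b| ≤ z * |a| + (1 - z) * |b| := abs_convex_comb_le hz₀ hz₁.le
    _ < z * M + (1 - z) * M :=
        add_lt_add_of_le_of_lt (mul_le_mul_of_nonneg_left ha hz₀)
          (mul_lt_mul_of_pos_left (hb.trans_lt hM) (sub_pos.2 hz₁))
    _ = M := by ring

theorem le_max_of_le_max_succ {a : ℕ → ℝ} {c : ℝ} (h : ∀ k, a (k + 1) ≤ max (a k) c) (k : ℕ) :
    a k ≤ max (a 0) c := by
  induction k with
  | zero => exact le_max_left _ _
  | succ k ih => exact (h k).trans (max_le ih (le_max_right _ _))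

section GRU

variable {nu nx : ℕ} (Wz Wf Wr : Matrix (Fin nx) (Fin nu) ℝ) (Uz Uf Ur : Matrix (Fin nx) (Fin nx) ℝ)
  (bz bf br : Fin nx → ℝ) (u : Fin nu → ℝ) (x : Fin nx → ℝ)

theorem exists_gruStep_apply_eq_convex_comb (j : Fin nx) :
    ∃ z r : ℝ, 0 ≤ z ∧ z < 1 ∧ |r| ≤ 1 ∧
      gruStep Wz Wf Wr Uz Uf Ur bz bf br u x j = z * x j + (1 - z) * r := by
  refine ⟨_, _, ?_, ?_, (Real.abs_tanh_lt_one _).le, rfl⟩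
  · exact (Real.sigmoid_pos _).le.trans_eq (sigmoid_eq_real_sigmoid _).symm
  · exact (sigmoid_eq_real_sigmoid _).trans_lt (Real.sigmoid_lt_one _)

theorem norm_gruStep_le_max :
    ‖gruStep Wz Wf Wr Uz Uf Ur bz bf br u x‖ ≤ max ‖x‖ 1 := by
  refine (pi_norm_le_iff_of_nonneg (zero_le_one.trans (le_max_right _ _))).2 fun j => ?_
  obtain ⟨z, r, hz₀, hz₁, hr, hj⟩ := exists_gruStep_apply_eq_convex_comb Wz Wf Wr Uz Uf Ur bz bf br u x j
  rw [Real.norm_eq_abs, hj]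
  exact abs_convex_comb_le_max hz₀ hz₁.le (norm_le_pi_norm x j) hr

theorem norm_gruStep_lt (hx : 1 < ‖x‖) :
    ‖gruStep Wz Wf Wr Uz Uf Ur bz bf br u x‖ < ‖x‖ := by
  refine (pi_norm_lt_iff (zero_lt_one.trans hx)).2 fun j => ?_
  obtain ⟨z, r, hz₀, hz₁, hr, hj⟩ := exists_gruStep_apply_eq_convex_comb Wz Wf Wr Uz Uf Ur bz bf br u x j
  rw [Real.norm_eq_abs, hj]
  exact abs_convex_comb_lt hz₀ hz₁ (norm_le_pi_norm x j) hr hx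

end GRU

theorem gru_norm_strict_decrease_general {nu nx : ℕ}
    (Wz Wf Wr : Matrix (Fin nx) (Fin nu) ℝ)
    (Uz Uf Ur : Matrix (Fin nx) (Fin nx) ℝ)
    (bz bf br : Fin nx → ℝ)
    (u : ℕ → Fin nu → ℝ)
    (xbar : Fin nx → ℝ)
    (x : ℕ → Fin nx → ℝ) (hx0 : x 0 = xbar)
    (hstep : ∀ k, x (k + 1) = gruStep Wz Wf Wr Uz Uf Ur bz bf br (u k) (x k)) :
    (∀ k, 1 < ‖x k‖ → ‖x (k + 1)‖ < ‖x k‖) ∧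
      (∀ k, ‖x k‖ ≤ max ‖xbar‖ 1) := by
  refine ⟨fun k hk => hstep k ▸ norm_gruStep_lt _ _ _ _ _ _ _ _ _ _ _ hk, fun k => ?_⟩
  rw [← hx0]
  exact le_max_of_le_max_succ (a := fun k => ‖x k‖)
    (fun k => hstep k ▸ norm_gruStep_le_max _ _ _ _ _ _ _ _ _ _ _) k

/-- **Lemma 2, claim (i).** Along any GRU trajectory driven by unity-bounded inputs,
the infinity norm of the state strictly decreases whenever it exceeds `1`; consequently
`‖x(k)‖_∞ ≤ max (‖x̄‖_∞, 1)` for all `k`. -/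
theorem gru_norm_strict_decrease {nu nx : ℕ}
    (Wz Wf Wr : Matrix (Fin nx) (Fin nu) ℝ)
    (Uz Uf Ur : Matrix (Fin nx) (Fin nx) ℝ)
    (bz bf br : Fin nx → ℝ)
    (u : ℕ → Fin nu → ℝ) (hu : ∀ t, ‖u t‖ ≤ 1)
    (xbar : Fin nx → ℝ)
    (x : ℕ → Fin nx → ℝ) (hx0 : x 0 = xbar)
    (hstep : ∀ k, x (k + 1) = gruStep Wz Wf Wr Uz Uf Ur bz bf br (u k) (x k)) :
    (∀ k, 1 < ‖x k‖ → ‖x (k + 1)‖ < ‖x k‖) ∧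
      (∀ k, ‖x k‖ ≤ max ‖xbar‖ 1) :=
  gru_norm_strict_decrease_general Wz Wf Wr Uz Uf Ur bz bf br u xbar x hx0 hstep
end

section
/- Quantified componentwise decrease (step of the proof of Lemma 2): let x(k) be the GRU state trajectory generated from an initial state x̄ ∈ ℝ^{n_x} by an input sequence u with ‖u(t)‖_∞ ≤ 1 for all t. Set λ = max(‖x̄‖_∞, 1), ω̲ = 1 − σ(‖[W_z λU_z b_z]‖_∞) and ε̲ = 1 − tanh(‖[W_r λU_r b_r]‖_∞). Then for every time k and every component j with |x_j(k)| > 1 it holds that |x_j(k+1)| < |x_j(k)| − ω̲ ε̲. -/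
open Real Filter

/-! A component with `|x_j| > 1` is pulled towards the interval `[-1, 1]`: the new value mixes `x_j`
with a `tanh` value through the gate `z_j`. Along the trajectory every state stays in the sup-norm
ball of radius `λ` (a convex combination of `x` and a vector in `(-1, 1)ⁿ`), so the arguments of the
gates are bounded by the concatenated norms. Hence `z_j ∈ [ω̲, 1 - ω̲]` and `|tanh| ≤ 1 - ε̲`, and
the mixture loses at least `ω̲ ε̲` of `|x_j|`. -/

open scoped Matrix

lemma sigmoid_eq_realSigmoid : _root_.sigmoid = Real.sigmoid := by
  funext s
  rw [_root_.sigmoid, Real.sigmoid_def, one_div]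

lemma sigmoid_mem_Icc_zero_one (s : ℝ) : _root_.sigmoid s ∈ Set.Icc 0 1 := by
  rw [sigmoid_eq_realSigmoid]
  exact ⟨Real.sigmoid_nonneg s, Real.sigmoid_le_one s⟩

lemma sigmoid_lt_one (s : ℝ) : _root_.sigmoid s < 1 :=
  sigmoid_eq_realSigmoid ▸ Real.sigmoid_lt_one s

lemma sigmoid_mem_Icc_of_abs_le {s N : ℝ} (h : |s| ≤ N) :
    _root_.sigmoid s ∈ Set.Icc (1 - _root_.sigmoid N) (_root_.sigmoid N) := by
  rw [sigmoid_eq_realSigmoid, ← Real.sigmoid_neg]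
  exact ⟨Real.sigmoid_le (abs_le.1 h).1, Real.sigmoid_le (abs_le.1 h).2⟩

namespace Real

lemma tanh_monotone : Monotone tanh := fun a b hab => by
  have mem (s : ℝ) : tanh s ∈ Set.Ioo (-1) 1 := ⟨neg_one_lt_tanh s, tanh_lt_one s⟩
  rwa [← artanh_le_artanh_iff (mem a) (mem b), artanh_tanh, artanh_tanh]

lemma abs_tanh_le_of_abs_le {s N : ℝ} (h : |s| ≤ N) : |tanh s| ≤ tanh N := by
  rw [abs_le, ← tanh_neg]
  exact ⟨tanh_monotone (abs_le.1 h).1, tanh_monotone (abs_le.1 h).2⟩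

end Real

lemma abs_mulVec_apply_le {m n : Type*} [Fintype n] (A : Matrix m n ℝ) (v : n → ℝ) (j : m) :
    |(A *ᵥ v) j| ≤ (∑ i, |A j i|) * ‖v‖ := by
  rw [Finset.sum_mul]
  refine (Finset.abs_sum_le_sum_abs _ _).trans (Finset.sum_le_sum fun i _ => ?_)
  rw [abs_mul]
  exact mul_le_mul_of_nonneg_left (norm_le_pi_norm v i) (abs_nonneg _)

lemma le_catNorm {n m p : ℕ} (A : Matrix (Fin n) (Fin m) ℝ) (B : Matrix (Fin n) (Fin p) ℝ)
    (c : Fin n → ℝ) (j : Fin n) : ∑ i, |A j i| + ∑ i, |B j i| + |c j| ≤ catNorm A B c :=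
  le_ciSup (f := fun i => ∑ k, |A i k| + ∑ k, |B i k| + |c i|) (Set.finite_range _).bddAbove j

lemma abs_affine_apply_le_catNorm {n m p : ℕ} (A : Matrix (Fin n) (Fin m) ℝ)
    (B : Matrix (Fin n) (Fin p) ℝ) (c : Fin n → ℝ) {u : Fin m → ℝ} {v : Fin p → ℝ} {lam : ℝ}
    (hlam : 0 ≤ lam) (hu : ‖u‖ ≤ 1) (hv : ‖v‖ ≤ lam) (j : Fin n) :
    |(A *ᵥ u + B *ᵥ v + c) j| ≤ catNorm A (lam • B) c := by
  have hAu : |(A *ᵥ u) j| ≤ ∑ i, |A j i| :=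
    (abs_mulVec_apply_le A u j).trans (mul_le_of_le_one_right (by positivity) hu)
  have hBv : |(B *ᵥ v) j| ≤ ∑ i, |(lam • B) j i| := by
    simp only [Matrix.smul_apply, smul_eq_mul, abs_mul, abs_of_nonneg hlam, ← Finset.mul_sum]
    rw [mul_comm]
    exact (abs_mulVec_apply_le B v j).trans (by gcongr)
  calc |(A *ᵥ u + B *ᵥ v + c) j| ≤ |(A *ᵥ u) j| + |(B *ᵥ v) j| + |c j| :=
        (abs_add_le _ _).trans (add_le_add_left (abs_add_le _ _) _)
    _ ≤ ∑ i, |A j i| + ∑ i, |(lam • B) j i| + |c j| := by gcongr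
    _ ≤ catNorm A (lam • B) c := le_catNorm A (lam • B) c j

lemma abs_convex_comb_le_s2 {z a r M : ℝ} (hz : z ∈ Set.Icc 0 1) (ha : |a| ≤ M) (hr : |r| ≤ M) :
    |z * a + (1 - z) * r| ≤ M := by
  obtain ⟨hz0, hz1⟩ := hz
  calc |z * a + (1 - z) * r| ≤ z * |a| + (1 - z) * |r| := by
        simpa only [abs_mul, abs_of_nonneg hz0, abs_of_nonneg (sub_nonneg.2 hz1)]
          using abs_add_le (z * a) ((1 - z) * r)
    _ ≤ z * M + (1 - z) * M := by gcongr
    _ = M := by ring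

lemma abs_gate_mix_lt_of_one_lt {z r t Z R : ℝ} (hz : z ∈ Set.Icc (1 - Z) Z) (hZ : Z < 1)
    (hr : |r| ≤ R) (hR : R ≤ 1) (ht : 1 < t) :
    |z * t + (1 - z) * r| < t - (1 - Z) * (1 - R) := by
  obtain ⟨hzl, hzu⟩ := hz
  obtain ⟨hrl, hru⟩ := abs_le.1 hr
  rw [abs_lt]
  constructor
  · nlinarith
  · -- `z t + (1 - z) r = t - (1 - z) (t - r)` with `1 - z ≥ 1 - Z > 0` and `t - r > 1 - R`
    nlinarith

lemma abs_gate_mix_lt {z r t Z R : ℝ} (hz : z ∈ Set.Icc (1 - Z) Z) (hZ : Z < 1)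
    (hr : |r| ≤ R) (hR : R ≤ 1) (ht : 1 < |t|) :
    |z * t + (1 - z) * r| < |t| - (1 - Z) * (1 - R) := by
  rcases le_or_gt 0 t with h | h
  · rw [abs_of_nonneg h] at ht ⊢
    exact abs_gate_mix_lt_of_one_lt hz hZ hr hR ht
  · rw [abs_of_neg h] at ht ⊢
    have hneg := abs_gate_mix_lt_of_one_lt (r := -r) hz hZ (by rwa [abs_neg]) hR ht
    rwa [show z * -t + (1 - z) * -r = -(z * t + (1 - z) * r) by ring, abs_neg] at hneg

section GRU

variable {nu nx : ℕ} {Wz Wf Wr : Matrix (Fin nx) (Fin nu) ℝ} {Uz Uf Ur : Matrix (Fin nx) (Fin nx) ℝ}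
  {bz bf br : Fin nx → ℝ} {u : Fin nu → ℝ} {x : Fin nx → ℝ}

lemma norm_gruStep_le {lam : ℝ} (hlam : 1 ≤ lam) (hx : ‖x‖ ≤ lam) :
    ‖gruStep Wz Wf Wr Uz Uf Ur bz bf br u x‖ ≤ lam := by
  refine (pi_norm_le_iff_of_nonneg (by linarith)).2 fun j => ?_
  rw [Real.norm_eq_abs]
  exact abs_convex_comb_le_s2 (sigmoid_mem_Icc_zero_one _) ((norm_le_pi_norm x j).trans hx)
    ((Real.abs_tanh_lt_one _).le.trans hlam)

lemma abs_gruStep_lt {lam : ℝ} (hlam : 0 ≤ lam) (hu : ‖u‖ ≤ 1) (hx : ‖x‖ ≤ lam) {j : Fin nx}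
    (hj : 1 < |x j|) :
    |gruStep Wz Wf Wr Uz Uf Ur bz bf br u x j| < |x j| -
      (1 - _root_.sigmoid (catNorm Wz (lam • Uz) bz)) * (1 - tanh (catNorm Wr (lam • Ur) br)) := by
  set f : Fin nx → ℝ := fun i => _root_.sigmoid ((Wf *ᵥ u + Uf *ᵥ x + bf) i)
  have hf : ‖f‖ ≤ 1 := (pi_norm_le_iff_of_nonneg zero_le_one).2 fun i =>
    have hfi := sigmoid_mem_Icc_zero_one ((Wf *ᵥ u + Uf *ᵥ x + bf) i)
    (abs_of_nonneg hfi.1).trans_le hfi.2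
  have hfx : ‖f * x‖ ≤ lam :=
    (norm_mul_le f x).trans ((mul_le_of_le_one_left (norm_nonneg x) hf).trans hx)
  exact abs_gate_mix_lt
    (sigmoid_mem_Icc_of_abs_le (abs_affine_apply_le_catNorm Wz Uz bz hlam hu hx j))
    (_root_.sigmoid_lt_one _)
    (Real.abs_tanh_le_of_abs_le (abs_affine_apply_le_catNorm Wr Ur br hlam hu hfx j))
    (tanh_lt_one _).le hj

end GRU

/-- **Quantified componentwise decrease (step of the proof of Lemma 2).**
With `λ = max (‖x̄‖_∞, 1)`, `ω̲ = 1 - σ(‖[W_z λU_z b_z]‖_∞)` and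
`ε̲ = 1 - tanh(‖[W_r λU_r b_r]‖_∞)`, whenever `|x_j(k)| > 1` one has
`|x_j(k+1)| < |x_j(k)| - ω̲ ε̲`. -/
theorem gru_componentwise_decrease {nu nx : ℕ}
    (Wz Wf Wr : Matrix (Fin nx) (Fin nu) ℝ)
    (Uz Uf Ur : Matrix (Fin nx) (Fin nx) ℝ)
    (bz bf br : Fin nx → ℝ)
    (u : ℕ → Fin nu → ℝ) (hu : ∀ t, ‖u t‖ ≤ 1)
    (xbar : Fin nx → ℝ)
    (x : ℕ → Fin nx → ℝ) (hx0 : x 0 = xbar)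
    (hstep : ∀ k, x (k + 1) = gruStep Wz Wf Wr Uz Uf Ur bz bf br (u k) (x k)) :
    ∀ k (j : Fin nx), 1 < |x k j| →
      |x (k + 1) j| < |x k j| -
        (1 - _root_.sigmoid (catNorm Wz ((max ‖xbar‖ 1) • Uz) bz)) *
          (1 - Real.tanh (catNorm Wr ((max ‖xbar‖ 1) • Ur) br)) := by
  have hlam : (1 : ℝ) ≤ max ‖xbar‖ 1 := le_max_right _ _
  have bounded : ∀ k, ‖x k‖ ≤ max ‖xbar‖ 1 := by
    intro k
    induction k with
    | zero => exact hx0 ▸ le_max_left _ _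
    | succ k ih => exact hstep k ▸ norm_gruStep_le hlam ih
  intro k j hj
  rw [hstep k]
  exact abs_gruStep_lt (zero_le_one.trans hlam) (hu k) (bounded k) hj
end
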